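/- Under the hypotheses of the preceding setup (r monotone, r(n) → ∞), if the series ∑_{k≥1} exp(-m·r(k)) converges for j = m and ∑_{k≥1} exp(-(m-1)·r(k)) diverges, then P(limsup_{n→∞} (ξ̄_n - a_n) = m) = 1, and moreover P(ξ̄_n = a_n + l infinitely often) = 1 for every l ∈ {-1, 0, 1, …, m}. -/

import Mathlib

/-!
Write `q k = P(ξ ≥ k)`, so that `q (k + 1) = q k * exp (-r (k + 1))`. The quantile `a` takes
the value `k` exactly on `[⌈1 / q k⌉, ⌈1 / q (k + 1)⌉)`, a block of about `1 / q (k + 1)`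
indices because `r → ∞`. Hence `∑ₙ q (aₙ + j)` converges iff `∑ₖ q (k + j) / q (k + 1)` does,
and by monotonicity of `r` this ratio lies between `exp (-(j - 1) r (k + j))` and
`exp (-(j - 1) r (k + 2))`. So `∑ₙ P(ξₙ > aₙ + m) < ∞` and `∑ₙ P(ξₙ ≥ aₙ₊₁ + m) = ∞`, and the
two Borel–Cantelli lemmas give, almost surely, `ξₙ ≤ aₙ + m` eventually and `ξₙ ≥ aₙ₊₁ + m`
infinitely often: `ξ̄ₙ - aₙ` is eventually at most `m` and equals `m` infinitely often.

For large `k` and `n = ⌈1 / q k⌉` we have `aₙ = k` and `P(ξ̄ₙ < aₙ) = (1 - q k)ⁿ ≥ e⁻⁴`. Since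
`aₙ → ∞`, the event `{ξ̄ₙ < aₙ infinitely often}` is a tail event, so Kolmogorov's 0-1 law makes
it almost sure. Finally `aₙ₊₁ ≤ aₙ + 1` eventually, so `ξ̄ₙ - aₙ` goes down by at most one per
step and therefore visits every level between `-1` and `m` infinitely often.
-/

open MeasureTheory ProbabilityTheory Filter Finset Topology Asymptotics

theorem exists_eq_of_sub_one_le_succ {d : ℕ → ℤ} {l : ℤ} {n₁ n₂ : ℕ} (hn : n₁ ≤ n₂)
    (hstep : ∀ n, n₁ ≤ n → d n - 1 ≤ d (n + 1)) (h₁ : l ≤ d n₁) (h₂ : d n₂ ≤ l) :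
    ∃ n, n₁ ≤ n ∧ d n = l := by
  induction n₂, hn using Nat.le_induction with
  | base => exact ⟨n₁, le_rfl, le_antisymm h₂ h₁⟩
  | succ n hn ih =>
    by_cases h : d n ≤ l
    · exact ih h
    · exact ⟨n + 1, by omega, le_antisymm h₂ (by linarith [hstep n hn])⟩

theorem frequently_eq_of_sub_one_le_succ {d : ℕ → ℤ} {lo hi l : ℤ}
    (hstep : ∀ᶠ n in atTop, d n - 1 ≤ d (n + 1)) (hhi : ∃ᶠ n in atTop, hi ≤ d n)
    (hlo : ∃ᶠ n in atTop, d n ≤ lo) (hl₁ : lo ≤ l) (hl₂ : l ≤ hi) :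
    ∃ᶠ n in atTop, d n = l := by
  rw [frequently_atTop]
  intro N
  obtain ⟨N', hN'⟩ := eventually_atTop.1 hstep
  obtain ⟨n₁, hn₁, hd₁⟩ := frequently_atTop.1 hhi (max N N')
  obtain ⟨n₂, hn₂, hd₂⟩ := frequently_atTop.1 hlo n₁
  obtain ⟨n, hn, hdn⟩ := exists_eq_of_sub_one_le_succ hn₂ (fun n hn => hN' n (by omega))
    (hl₂.trans hd₁) (hd₂.trans hl₁)
  exact ⟨n, by omega, hdn⟩

theorem limsup_eq_of_eventually_le_of_frequently_ge {d : ℕ → ℤ} {c : ℤ}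
    (hle : ∀ᶠ n in atTop, d n ≤ c) (hge : ∃ᶠ n in atTop, c ≤ d n) : limsup d atTop = c :=
  le_antisymm (limsup_le_of_le (IsCoboundedUnder.of_frequently_ge hge) hle)
    (le_limsup_of_frequently_le hge ⟨c, eventually_map.2 hle⟩)

theorem eventually_sup_range_le {x b : ℕ → ℕ} {c N : ℕ} (hb : MonotoneOn b (Set.Ici N))
    (hb_top : Tendsto b atTop atTop) (hx : ∀ᶠ n in atTop, x n ≤ b n + c) :
    ∀ᶠ n in atTop, (range n).sup x ≤ b n + c := by
  obtain ⟨N₀, hN₀⟩ := eventually_atTop.1 (hx.and (eventually_ge_atTop N))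
  filter_upwards [hb_top.eventually_ge_atTop ((range N₀).sup x), eventually_ge_atTop N₀]
    with n hbn hn
  refine Finset.sup_le fun i hi => ?_
  rcases lt_or_ge i N₀ with hi₀ | hi₀
  · have := Finset.le_sup (f := x) (mem_range.2 hi₀)
    omega
  · have hbi : b i ≤ b n := hb (hN₀ i hi₀).2
      ((hN₀ i hi₀).2.trans (mem_range.1 hi).le) (mem_range.1 hi).le
    have := (hN₀ i hi₀).1
    omega

theorem frequently_forall_lt_iff {x b : ℕ → ℕ} (hb : Tendsto b atTop atTop) (j : ℕ) :
    (∃ᶠ n in atTop, ∀ i < n, x i < b n) ↔ ∃ᶠ n in atTop, ∀ i ∈ Ico j n, x i < b n := by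
  refine ⟨fun h => h.mono fun n hn i hi => hn i (mem_Ico.1 hi).2, fun h => ?_⟩
  refine (h.and_eventually (hb.eventually_gt_atTop ((range j).sup x))).mono ?_
  rintro n ⟨hn, hbn⟩ i hi
  rcases lt_or_ge i j with hij | hij
  · exact (Finset.le_sup (f := x) (mem_range.2 hij)).trans_lt hbn
  · exact hn i (mem_Ico.2 ⟨hij, hi⟩)

theorem limsup_sup_range_sub_eq {x b : ℕ → ℕ} {m N : ℕ} (hb_mono : MonotoneOn b (Set.Ici N))
    (hb_top : Tendsto b atTop atTop) (hb_step : ∀ᶠ n in atTop, b (n + 1) ≤ b n + 1)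
    (hle : ∀ᶠ n in atTop, x n ≤ b n + m) (hge : ∃ᶠ n in atTop, b (n + 1) + m ≤ x n)
    (hlow : ∃ᶠ n in atTop, ∀ i < n, x i < b n) :
    limsup (fun n => (((range n).sup x : ℕ) : ℤ) - b n) atTop = m ∧
      ∀ l : ℤ, -1 ≤ l → l ≤ m → ∃ᶠ n in atTop, (((range n).sup x : ℕ) : ℤ) = b n + l := by
  set d : ℕ → ℤ := fun n => (((range n).sup x : ℕ) : ℤ) - b n with hd
  have hd_le : ∀ᶠ n in atTop, d n ≤ m :=
    (eventually_sup_range_le hb_mono hb_top hle).mono fun n hn => by simp only [hd]; omega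
  have hd_ge : ∃ᶠ n in atTop, (m : ℤ) ≤ d n := by
    refine (tendsto_add_atTop_nat 1).frequently (hge.mono fun n hn => ?_)
    have := Finset.le_sup (f := x) (mem_range.2 (Nat.lt_add_one n))
    simp only [hd]; omega
  have hd_low : ∃ᶠ n in atTop, d n ≤ -1 := by
    refine (hlow.and_eventually (hb_top.eventually_gt_atTop 0)).mono fun n ⟨hn, hbn⟩ => ?_
    have := (Finset.sup_lt_iff hbn).2 fun i hi => hn i (mem_range.1 hi)
    simp only [hd]; omega
  have hd_step : ∀ᶠ n in atTop, d n - 1 ≤ d (n + 1) := by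
    refine hb_step.mono fun n hn => ?_
    have := Finset.sup_mono (f := x) (range_subset_range.2 (Nat.le_add_right n 1))
    simp only [hd]; omega
  refine ⟨limsup_eq_of_eventually_le_of_frequently_ge hd_le hd_ge, fun l hl₁ hl₂ => ?_⟩
  exact (frequently_eq_of_sub_one_le_succ hd_step hd_ge hd_low hl₁ hl₂).mono fun n hn => by
    simp only [hd] at hn; omega

theorem summable_comp_iff_summable_sub_mul {a c : ℕ → ℕ} (hc : Monotone c)
    (hc_top : Tendsto c atTop atTop) (hfib : ∀ k n, n ∈ Ico (c k) (c (k + 1)) → a n = k)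
    {g : ℕ → ℝ} (hg : ∀ k, 0 ≤ g k) :
    Summable (fun n => g (a n)) ↔ Summable (fun k => ((c (k + 1) : ℝ) - c k) * g k) := by
  have hfiber : ∀ k, ∑ n ∈ Ico (c k) (c (k + 1)), g (a n) = ((c (k + 1) : ℝ) - c k) * g k := by
    intro k
    rw [sum_congr rfl fun n hn => by rw [hfib k n hn], sum_const, Nat.card_Ico, nsmul_eq_mul,
      Nat.cast_sub (hc k.le_succ)]
  have hblocks : ∀ K, ∑ n ∈ range (c K), g (a n)
      = ∑ n ∈ range (c 0), g (a n) + ∑ k ∈ range K, ((c (k + 1) : ℝ) - c k) * g k := by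
    intro K
    induction K with
    | zero => simp
    | succ K ih =>
      rw [sum_range_succ, ← add_assoc, ← ih, ← hfiber, sum_range_add_sum_Ico _ (hc K.le_succ)]
  have hS : Monotone fun N => ∑ n ∈ range N, g (a n) :=
    monotone_nat_of_le_succ fun N => by simpa [sum_range_succ] using hg _
  rw [summable_iff_not_tendsto_nat_atTop_of_nonneg fun n => hg _,
    summable_iff_not_tendsto_nat_atTop_of_nonneg fun k =>
      mul_nonneg (sub_nonneg.2 (Nat.cast_le.2 (hc k.le_succ))) (hg k)]
  refine not_congr ⟨fun h => ?_, fun h => tendsto_atTop_atTop_of_monotone hS fun B => ?_⟩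
  · have := tendsto_atTop_add_const_left atTop (-∑ n ∈ range (c 0), g (a n)) (h.comp hc_top)
    refine this.congr fun K => ?_
    rw [Function.comp_apply, hblocks K, neg_add_cancel_left]
  · have hT := tendsto_atTop_add_const_left atTop (∑ n ∈ range (c 0), g (a n)) h
    obtain ⟨K, hK⟩ := (hT.eventually_ge_atTop B).exists
    exact ⟨c K, by rw [hblocks]; exact hK⟩

theorem Real.exp_neg_two_mul_le_one_sub {x : ℝ} (hx₀ : 0 ≤ x) (hx : x ≤ 1 / 2) :
    Real.exp (-(2 * x)) ≤ 1 - x := by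
  rw [Real.exp_neg]
  calc (Real.exp (2 * x))⁻¹ ≤ (2 * x + 1)⁻¹ :=
        inv_anti₀ (by positivity) (Real.add_one_le_exp _)
    _ ≤ 1 - x := by
        rw [inv_le_iff_one_le_mul₀ (by positivity)]
        nlinarith

theorem succ_eq_mul_exp_neg_of_log {q R r : ℕ → ℝ} (hq_pos : ∀ k, 0 < q k)
    (hR : ∀ n, R n = -Real.log (q n)) (hr : ∀ n : ℕ, 1 ≤ n → r n = R n - R (n - 1)) (k : ℕ) :
    q (k + 1) = q k * Real.exp (-r (k + 1)) := by
  have hlog : -r (k + 1) = Real.log (q (k + 1)) - Real.log (q k) := by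
    rw [hr (k + 1) (by omega), hR, hR, Nat.add_sub_cancel]; ring
  rw [hlog, Real.exp_sub, Real.exp_log (hq_pos _), Real.exp_log (hq_pos _),
    mul_div_cancel₀ _ (hq_pos k).ne']

theorem tendsto_zero_of_tendsto_succ_div {q : ℕ → ℝ} (hq_pos : ∀ k, 0 < q k)
    (hratio : Tendsto (fun k => q (k + 1) / q k) atTop (𝓝 0)) : Tendsto q atTop (𝓝 0) := by
  refine (summable_of_ratio_test_tendsto_lt_one zero_lt_one
    (Eventually.of_forall fun k => (hq_pos k).ne') (hratio.congr fun k => ?_)).tendsto_atTop_zero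
  rw [Real.norm_of_nonneg (hq_pos _).le, Real.norm_of_nonneg (hq_pos _).le]

section TailSequence

variable {q r : ℕ → ℝ} (hq : ∀ k, q (k + 1) = q k * Real.exp (-r (k + 1)))
include hq

theorem tail_add_eq (k j : ℕ) :
    q (k + j) = q k * Real.exp (-∑ i ∈ range j, r (k + i + 1)) := by
  induction j with
  | zero => simp
  | succ j ih =>
    rw [← add_assoc, hq, ih, sum_range_succ, mul_assoc, ← Real.exp_add, neg_add]

variable (hq_pos : ∀ k, 0 < q k)
include hq_pos

theorem tail_add_div_le (hr : Monotone r) (k j : ℕ) :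
    q (k + j) / q k ≤ Real.exp (-(j : ℝ) * r (k + 1)) := by
  rw [tail_add_eq hq, mul_div_cancel_left₀ _ (hq_pos k).ne', Real.exp_le_exp, neg_mul,
    neg_le_neg_iff]
  simpa using card_nsmul_le_sum (range j) _ _ fun i _ => hr (by omega : k + 1 ≤ k + i + 1)

theorem exp_neg_le_tail_add_div (hr : Monotone r) (k j : ℕ) :
    Real.exp (-(j : ℝ) * r (k + j)) ≤ q (k + j) / q k := by
  rw [tail_add_eq hq, mul_div_cancel_left₀ _ (hq_pos k).ne', Real.exp_le_exp, neg_mul,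
    neg_le_neg_iff]
  simpa using sum_le_card_nsmul (range j) _ _ fun i hi =>
    hr (by simp at hi; omega : k + i + 1 ≤ k + j)

theorem tendsto_tail_succ_div (hr_top : Tendsto r atTop atTop) :
    Tendsto (fun k => q (k + 1) / q k) atTop (𝓝 0) := by
  refine (Real.tendsto_exp_neg_atTop_nhds_zero.comp
    (hr_top.comp (tendsto_add_atTop_nat 1))).congr fun k => ?_
  rw [hq, mul_div_cancel_left₀ _ (hq_pos k).ne', Function.comp_apply, Function.comp_apply]

end TailSequence

/-- `ceilInv q k` is the first `n` at which the quantile `a n` of the tail `q` reaches `k`. -/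
noncomputable def ceilInv (q : ℕ → ℝ) (k : ℕ) : ℕ := ⌈(q k)⁻¹⌉₊

def IsQuantile (q : ℕ → ℝ) (a : ℕ → ℕ) : Prop :=
  ∀ n : ℕ, 1 ≤ n → IsGreatest {k : ℕ | 1 / (n : ℝ) ≤ q k} (a n)

section Quantile

variable {q : ℕ → ℝ} {a : ℕ → ℕ}

theorem ceilInv_mono (hq_pos : ∀ k, 0 < q k) (hq_anti : Antitone q) : Monotone (ceilInv q) :=
  fun _ k hjk => Nat.ceil_mono (inv_anti₀ (hq_pos k) (hq_anti hjk))

theorem tendsto_ceilInv (hq_pos : ∀ k, 0 < q k) (hq_zero : Tendsto q atTop (𝓝 0)) :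
    Tendsto (ceilInv q) atTop atTop :=
  tendsto_nat_ceil_atTop.comp (tendsto_inv_nhdsGT_zero.comp
    (tendsto_nhdsWithin_iff.2 ⟨hq_zero, Eventually.of_forall hq_pos⟩))

theorem tendsto_ceilInv_mul (hq_pos : ∀ k, 0 < q k) (hq_zero : Tendsto q atTop (𝓝 0)) :
    Tendsto (fun k => (ceilInv q k : ℝ) * q k) atTop (𝓝 1) := by
  have hupper : Tendsto (fun k => 1 + q k) atTop (𝓝 1) := by
    simpa using tendsto_const_nhds.add hq_zero
  refine tendsto_of_tendsto_of_tendsto_of_le_of_le tendsto_const_nhds hupper (fun k => ?_)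
    fun k => ?_
  · rw [← inv_mul_cancel₀ (hq_pos k).ne']
    exact mul_le_mul_of_nonneg_right (Nat.le_ceil _) (hq_pos k).le
  · have := mul_le_mul_of_nonneg_right (Nat.ceil_lt_add_one (inv_pos.2 (hq_pos k)).le).le
      (hq_pos k).le
    rwa [add_mul, inv_mul_cancel₀ (hq_pos k).ne', one_mul] at this

theorem tendsto_ceilInv_sub_mul (hq_pos : ∀ k, 0 < q k)
    (hratio : Tendsto (fun k => q (k + 1) / q k) atTop (𝓝 0)) :
    Tendsto (fun k => ((ceilInv q (k + 1) : ℝ) - ceilInv q k) * q (k + 1)) atTop (𝓝 1) := by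
  have hq_zero := tendsto_zero_of_tendsto_succ_div hq_pos hratio
  have h := ((tendsto_ceilInv_mul hq_pos hq_zero).comp (tendsto_add_atTop_nat 1)).sub
    ((tendsto_ceilInv_mul hq_pos hq_zero).mul hratio)
  rw [mul_zero, sub_zero] at h
  refine h.congr fun k => ?_
  rw [Function.comp_apply, mul_assoc, mul_div_cancel₀ _ (hq_pos k).ne', sub_mul]

theorem one_le_ceilInv (hq_pos : ∀ k, 0 < q k) (k : ℕ) : 1 ≤ ceilInv q k :=
  Nat.ceil_pos.2 (inv_pos.2 (hq_pos k))

theorem eventually_ceilInv_lt_succ (hq_pos : ∀ k, 0 < q k)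
    (hratio : Tendsto (fun k => q (k + 1) / q k) atTop (𝓝 0)) :
    ∀ᶠ k in atTop, ceilInv q k < ceilInv q (k + 1) :=
  ((tendsto_ceilInv_sub_mul hq_pos hratio).eventually (lt_mem_nhds one_pos)).mono fun _ hk =>
    Nat.cast_lt.1 (sub_pos.1 (pos_of_mul_pos_left hk (hq_pos _).le))

namespace IsQuantile

variable (ha : IsQuantile q a) (hq_pos : ∀ k, 0 < q k) (hq_anti : Antitone q)
include ha hq_pos hq_anti

theorem le_iff_ceilInv_le {n k : ℕ} (hn : 1 ≤ n) : k ≤ a n ↔ ceilInv q k ≤ n := by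
  rw [ceilInv, Nat.ceil_le, inv_le_comm₀ (hq_pos k) (by positivity), ← one_div]
  exact ⟨fun hk => (ha n hn).1.trans (hq_anti hk), fun hk => (ha n hn).2 hk⟩

theorem eq_of_mem_Ico {n k : ℕ} (hn : n ∈ Ico (ceilInv q k) (ceilInv q (k + 1))) : a n = k := by
  rw [mem_Ico] at hn
  have h1 : 1 ≤ n := (one_le_ceilInv hq_pos k).trans hn.1
  have hk := (ha.le_iff_ceilInv_le hq_pos hq_anti h1).2 hn.1
  have hk1 := (ha.le_iff_ceilInv_le hq_pos hq_anti h1 (k := k + 1)).not.2 (not_le.2 hn.2)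
  omega

theorem monotoneOn : MonotoneOn a (Set.Ici 1) := fun _ hn _ hn' hnn' =>
  (ha.le_iff_ceilInv_le hq_pos hq_anti hn').2
    (((ha.le_iff_ceilInv_le hq_pos hq_anti hn).1 le_rfl).trans hnn')

theorem tendsto_atTop : Tendsto a atTop atTop :=
  Filter.tendsto_atTop.2 fun K => (eventually_ge_atTop (max 1 (ceilInv q K))).mono fun _ hn =>
    (ha.le_iff_ceilInv_le hq_pos hq_anti (le_of_max_le_left hn)).2 (le_of_max_le_right hn)

theorem eventually_succ_le (hratio : Tendsto (fun k => q (k + 1) / q k) atTop (𝓝 0)) :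
    ∀ᶠ n in atTop, a (n + 1) ≤ a n + 1 := by
  obtain ⟨K, hK⟩ := eventually_atTop.1 (eventually_ceilInv_lt_succ hq_pos hratio)
  filter_upwards [(ha.tendsto_atTop hq_pos hq_anti).eventually_ge_atTop K, eventually_ge_atTop 1]
    with n hn hn1
  by_contra! h
  have h1 := (ha.le_iff_ceilInv_le hq_pos hq_anti (n := n + 1) (k := a n + 1 + 1) (by omega)).1
    (by omega)
  have h2 := (ha.le_iff_ceilInv_le hq_pos hq_anti (k := a n + 1) hn1).not.1 (by omega)
  have h3 := hK (a n + 1) (by omega)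
  omega

theorem eventually_apply_ceilInv (hratio : Tendsto (fun k => q (k + 1) / q k) atTop (𝓝 0)) :
    ∀ᶠ k in atTop, a (ceilInv q k) = k :=
  (eventually_ceilInv_lt_succ hq_pos hratio).mono fun _ hk =>
    ha.eq_of_mem_Ico hq_pos hq_anti (mem_Ico.2 ⟨le_rfl, hk⟩)

theorem summable_comp_iff (hratio : Tendsto (fun k => q (k + 1) / q k) atTop (𝓝 0))
    {g : ℕ → ℝ} (hg : ∀ k, 0 ≤ g k) :
    Summable (fun n => g (a n)) ↔ Summable (fun k => g k / q (k + 1)) := by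
  have hΔ : (fun k => (ceilInv q (k + 1) : ℝ) - ceilInv q k) ~[atTop] fun k => (q (k + 1))⁻¹ :=
    isEquivalent_of_tendsto_one ((tendsto_ceilInv_sub_mul hq_pos hratio).congr fun _ => by
      simp [div_inv_eq_mul])
  rw [summable_comp_iff_summable_sub_mul (ceilInv_mono hq_pos hq_anti)
    (tendsto_ceilInv hq_pos (tendsto_zero_of_tendsto_succ_div hq_pos hratio))
    (fun _ _ hn => ha.eq_of_mem_Ico hq_pos hq_anti hn) hg]
  exact (hΔ.mul IsEquivalent.refl).summable_iff_nat.trans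
    (summable_congr fun k => inv_mul_eq_div _ _)

end IsQuantile

end Quantile

noncomputable def tailProb {Ω : Type*} [MeasurableSpace Ω] (μ : Measure Ω) (X : Ω → ℕ)
    (k : ℕ) : ℝ :=
  (μ {ω | k ≤ X ω}).toReal

section Events

variable {Ω : Type*} {ξ : ℕ → Ω → ℕ}

theorem setOf_forall_lt_eq_biInter (n k : ℕ) :
    {ω | ∀ i < n, ξ i ω < k} = ⋂ i ∈ range n, ξ i ⁻¹' Set.Iio k := by
  ext; simp

theorem measurableSet_tail_frequently_forall_lt {b : ℕ → ℕ} (hb : Tendsto b atTop atTop) :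
    MeasurableSet[limsup (fun n => MeasurableSpace.comap (ξ n) inferInstance) atTop]
      {ω | ∃ᶠ n in atTop, ∀ i < n, ξ i ω < b n} := by
  rw [limsup_eq_iInf_iSup_of_nat, MeasurableSpace.measurableSet_iInf]
  intro j
  have hξ : ∀ i, j ≤ i →
      Measurable[⨆ i ≥ j, MeasurableSpace.comap (ξ i) inferInstance] (ξ i) := fun i hi =>
    (comap_measurable (ξ i)).mono
      (le_iSup₂ (f := fun i (_ : i ≥ j) => MeasurableSpace.comap (ξ i) inferInstance) i hi) le_rfl
  have hset : {ω | ∃ᶠ n in atTop, ∀ i < n, ξ i ω < b n}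
      = limsup (fun n => ⋂ i ∈ Ico j n, ξ i ⁻¹' Set.Iio (b n)) atTop := by
    ext ω
    simp [mem_limsup_iff_frequently_mem, frequently_forall_lt_iff hb j]
  rw [hset]
  exact @MeasurableSet.measurableSet_limsup _
    (⨆ i ≥ j, MeasurableSpace.comap (ξ i) inferInstance) _ fun n =>
      Finset.measurableSet_biInter _ fun i hi => hξ i (mem_Ico.1 hi).1 measurableSet_Iio

end Events

section Probability

variable {Ω : Type*} [MeasurableSpace Ω] {μ : Measure Ω}

theorem tailProb_pos [IsFiniteMeasure μ] {X : Ω → ℕ} (hpos : ∀ k, 0 < μ {ω | X ω = k}) (k : ℕ) :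
    0 < tailProb μ X k :=
  ENNReal.toReal_pos ((hpos k).trans_le (measure_mono fun _ h => h.ge)).ne' (measure_ne_top _ _)

theorem tailProb_antitone [IsFiniteMeasure μ] (X : Ω → ℕ) : Antitone (tailProb μ X) :=
  fun _ _ hjk => ENNReal.toReal_mono (measure_ne_top _ _) (measure_mono fun _ h => hjk.trans h)

theorem le_measure_limsup_of_frequently_le [IsFiniteMeasure μ] {s : ℕ → Set Ω}
    (hs : ∀ n, MeasurableSet (s n)) {δ : ENNReal} (h : ∃ᶠ n in atTop, δ ≤ μ (s n)) :
    δ ≤ μ (limsup s atTop) := by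
  rw [limsup_eq_iInf_iSup_of_nat]
  simp only [Set.iSup_eq_iUnion, Set.iInf_eq_iInter]
  rw [Antitone.measure_iInter (s := fun N => ⋃ i ≥ N, s i)
    (fun _ _ hNM => Set.biUnion_mono (fun _ hi => le_trans hNM hi) fun _ _ => le_rfl)
    (fun N => (MeasurableSet.biUnion (Set.to_countable _) fun n _ => hs n).nullMeasurableSet)
    ⟨0, measure_ne_top _ _⟩]
  refine le_iInf fun N => ?_
  obtain ⟨n, hn, hδ⟩ := frequently_atTop.1 h N
  exact hδ.trans (measure_mono (Set.subset_biUnion_of_mem (u := s) hn))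

variable {ξ : ℕ → Ω → ℕ}

theorem ae_eventually_le_of_summable [IsFiniteMeasure μ]
    (hident : ∀ i, IdentDistrib (ξ i) (ξ 0) μ μ) {b : ℕ → ℕ}
    (h : Summable fun n => tailProb μ (ξ 0) (b n + 1)) :
    ∀ᵐ ω ∂μ, ∀ᶠ n in atTop, ξ n ω ≤ b n := by
  have heq : ∀ n, μ {ω | b n + 1 ≤ ξ n ω} = ENNReal.ofReal (tailProb μ (ξ 0) (b n + 1)) :=
    fun n => ((hident n).measure_mem_eq measurableSet_Ici).trans
      (ENNReal.ofReal_toReal (measure_ne_top _ _)).symm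
  have hsum : ∑' n, μ {ω | b n + 1 ≤ ξ n ω} ≠ ⊤ := by
    simpa only [heq] using h.tsum_ofReal_ne_top
  filter_upwards [ae_eventually_notMem (s := fun n => {ω | b n + 1 ≤ ξ n ω}) hsum] with ω hω
  exact hω.mono fun n hn => by omega

theorem ae_frequently_le_of_not_summable [IsProbabilityMeasure μ]
    (hmeas : ∀ i, Measurable (ξ i)) (hindep : iIndepFun ξ μ)
    (hident : ∀ i, IdentDistrib (ξ i) (ξ 0) μ μ) {b : ℕ → ℕ}
    (h : ¬ Summable fun n => tailProb μ (ξ 0) (b n)) :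
    ∀ᵐ ω ∂μ, ∃ᶠ n in atTop, b n ≤ ξ n ω := by
  set s : ℕ → Set Ω := fun n => {ω | b n ≤ ξ n ω}
  have hs : ∀ n, MeasurableSet (s n) := fun n => hmeas n measurableSet_Ici
  have hs_indep : iIndepSet s μ := (iIndepSet_iff_meas_biInter hs).2 fun S =>
    hindep.meas_biInter fun i _ => ⟨Set.Ici (b i), measurableSet_Ici, rfl⟩
  have hsum : ∑' n, μ (s n) = ⊤ := by
    by_contra hne
    refine h ((ENNReal.summable_toReal hne).congr fun n => ?_)
    exact congrArg ENNReal.toReal ((hident n).measure_mem_eq measurableSet_Ici)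
  have hlimsup := (prob_compl_eq_zero_iff (MeasurableSet.measurableSet_limsup hs)).2
    (measure_limsup_eq_one hs hs_indep hsum)
  filter_upwards [mem_ae_iff.2 hlimsup] with ω hω
  exact mem_limsup_iff_frequently_mem.1 hω

theorem ae_frequently_forall_lt [IsProbabilityMeasure μ] (hmeas : ∀ i, Measurable (ξ i))
    (hindep : iIndepFun ξ μ) {b : ℕ → ℕ} (hb : Tendsto b atTop atTop) {δ : ENNReal}
    (hδ : 0 < δ) (h : ∃ᶠ n in atTop, δ ≤ μ {ω | ∀ i < n, ξ i ω < b n}) :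
    ∀ᵐ ω ∂μ, ∃ᶠ n in atTop, ∀ i < n, ξ i ω < b n := by
  set s : ℕ → Set Ω := fun n => {ω | ∀ i < n, ξ i ω < b n}
  have hs : ∀ n, MeasurableSet (s n) := fun n => by
    simp only [s, setOf_forall_lt_eq_biInter]
    exact Finset.measurableSet_biInter _ fun i _ => hmeas i measurableSet_Iio
  have hlimsup : {ω | ∃ᶠ n in atTop, ∀ i < n, ξ i ω < b n} = limsup s atTop := by
    ext ω; simp [s, mem_limsup_iff_frequently_mem]
  have h01 := measure_zero_or_one_of_measurableSet_limsup_atTop (fun n => (hmeas n).comap_le)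
    hindep.iIndep (measurableSet_tail_frequently_forall_lt hb)
  rw [hlimsup] at h01
  have hpos := hδ.trans_le (le_measure_limsup_of_frequently_le hs h)
  have hae : limsup s atTop ∈ ae μ := mem_ae_iff.2
    ((prob_compl_eq_zero_iff (MeasurableSet.measurableSet_limsup hs)).2
      (h01.resolve_left hpos.ne'))
  rwa [← hlimsup] at hae

theorem measure_forall_lt_eq (hindep : iIndepFun ξ μ)
    (hident : ∀ i, IdentDistrib (ξ i) (ξ 0) μ μ) (n k : ℕ) :
    μ {ω | ∀ i < n, ξ i ω < k} = μ {ω | ξ 0 ω < k} ^ n := by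
  rw [setOf_forall_lt_eq_biInter,
    hindep.meas_biInter fun i _ => ⟨Set.Iio k, measurableSet_Iio, rfl⟩,
    prod_congr rfl fun i _ => (hident i).measure_mem_eq measurableSet_Iio, prod_const,
    card_range]
  rfl

theorem ofReal_exp_neg_four_le_measure_forall_lt [IsProbabilityMeasure μ]
    (hmeas₀ : Measurable (ξ 0)) (hindep : iIndepFun ξ μ)
    (hident : ∀ i, IdentDistrib (ξ i) (ξ 0) μ μ) {n k : ℕ} (hq : tailProb μ (ξ 0) k ≤ 1 / 2)
    (hnq : n * tailProb μ (ξ 0) k ≤ 2) :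
    ENNReal.ofReal (Real.exp (-4)) ≤ μ {ω | ∀ i < n, ξ i ω < k} := by
  have hcompl : μ {ω | ξ 0 ω < k} = 1 - μ {ω | k ≤ ξ 0 ω} := by
    rw [← prob_compl_eq_one_sub (s := {ω | k ≤ ξ 0 ω}) (hmeas₀ measurableSet_Ici)]
    congr 1; ext; simp
  rw [measure_forall_lt_eq hindep hident, hcompl, ENNReal.ofReal_le_iff_le_toReal
    (by simp), ENNReal.toReal_pow, ENNReal.toReal_sub_of_le prob_le_one (by simp),
    ENNReal.toReal_one]
  set x := tailProb μ (ξ 0) k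
  have hx₀ : 0 ≤ x := ENNReal.toReal_nonneg
  calc Real.exp (-4) ≤ Real.exp (-(2 * x)) ^ n := by
        rw [← Real.exp_nat_mul, Real.exp_le_exp]; nlinarith
    _ ≤ (1 - x) ^ n := pow_le_pow_left₀ (Real.exp_pos _).le
        (Real.exp_neg_two_mul_le_one_sub hx₀ hq) n

end Probability

namespace IsQuantile

variable {q r : ℕ → ℝ} {a : ℕ → ℕ} (ha : IsQuantile q a) (hq_pos : ∀ k, 0 < q k)
  (hq_anti : Antitone q) (hq : ∀ k, q (k + 1) = q k * Real.exp (-r (k + 1))) (hr : Monotone r)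
  (hr_top : Tendsto r atTop atTop)
include ha hq_pos hq_anti hq hr hr_top

theorem summable_tail_add_succ {m : ℕ}
    (hconv : Summable fun k : ℕ => Real.exp (-(m : ℝ) * r (k + 1))) :
    Summable fun n => q (a n + m + 1) := by
  refine (ha.summable_comp_iff hq_pos hq_anti (tendsto_tail_succ_div hq hq_pos hr_top)
    (g := fun k => q (k + m + 1)) fun k => (hq_pos _).le).2 ?_
  refine ((summable_nat_add_iff 1).2 hconv).of_nonneg_of_le
    (fun k => div_nonneg (hq_pos _).le (hq_pos _).le) fun k => ?_
  rw [Nat.add_right_comm]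
  exact tail_add_div_le hq hq_pos hr (k + 1) m

theorem not_summable_tail_add {m : ℕ} (hm : 1 ≤ m)
    (hdiv : ¬ Summable fun k : ℕ => Real.exp (-((m : ℝ) - 1) * r (k + 1))) :
    ¬ Summable fun n => q (a (n + 1) + m) := by
  rw [summable_nat_add_iff 1 (f := fun n => q (a n + m)), ha.summable_comp_iff hq_pos hq_anti
    (tendsto_tail_succ_div hq hq_pos hr_top) (g := fun k => q (k + m)) fun k => (hq_pos _).le]
  refine fun hsum => hdiv ((summable_nat_add_iff (m - 1)).1
    (hsum.of_nonneg_of_le (fun k => (Real.exp_pos _).le) fun k => ?_))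
  have := exp_neg_le_tail_add_div hq hq_pos hr (k + 1) (m - 1)
  rw [Nat.cast_sub hm, Nat.cast_one, show k + 1 + (m - 1) = k + m by omega] at this
  rwa [show k + (m - 1) + 1 = k + m by omega]

end IsQuantile

theorem ae_frequently_forall_lt_quantile {Ω : Type*} [MeasurableSpace Ω] {μ : Measure Ω}
    [IsProbabilityMeasure μ] {ξ : ℕ → Ω → ℕ} (hmeas : ∀ i, Measurable (ξ i))
    (hindep : iIndepFun ξ μ) (hident : ∀ i, IdentDistrib (ξ i) (ξ 0) μ μ) {a : ℕ → ℕ}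
    (ha : IsQuantile (tailProb μ (ξ 0)) a) (hq_pos : ∀ k, 0 < tailProb μ (ξ 0) k)
    (hratio : Tendsto (fun k => tailProb μ (ξ 0) (k + 1) / tailProb μ (ξ 0) k) atTop (𝓝 0)) :
    ∀ᵐ ω ∂μ, ∃ᶠ n in atTop, ∀ i < n, ξ i ω < a n := by
  have hq_anti := tailProb_antitone (μ := μ) (ξ 0)
  have hq_zero := tendsto_zero_of_tendsto_succ_div hq_pos hratio
  refine ae_frequently_forall_lt hmeas hindep (ha.tendsto_atTop hq_pos hq_anti)
    (ENNReal.ofReal_pos.2 (Real.exp_pos (-4))) ?_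
  refine (tendsto_ceilInv hq_pos hq_zero).frequently (Eventually.frequently ?_)
  filter_upwards [ha.eventually_apply_ceilInv hq_pos hq_anti hratio,
    hq_zero.eventually (ge_mem_nhds (by norm_num : (0 : ℝ) < 1 / 2)),
    (tendsto_ceilInv_mul hq_pos hq_zero).eventually (ge_mem_nhds one_lt_two)] with k hk hqk hck
  rw [hk]
  exact ofReal_exp_neg_four_le_measure_forall_lt (hmeas 0) hindep hident hqk hck

/-- Corollary 1: if `∑ exp(-m r(k))` converges and `∑ exp(-(m-1) r(k))` diverges,
then a.s. `limsup (ξ̄ₙ - aₙ) = m`, and `P(ξ̄ₙ = aₙ + l  i.o.) = 1` for every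
`l ∈ {-1, 0, 1, …, m}`. -/
theorem limsup_max_sub_a_eq_m {Ω : Type*} [MeasureSpace Ω]
    [IsProbabilityMeasure (ℙ : Measure Ω)] (ξ : ℕ → Ω → ℕ)
    (hmeas : ∀ i, Measurable (ξ i))
    (hindep : iIndepFun ξ ℙ)
    (hident : ∀ i, IdentDistrib (ξ i) (ξ 0) ℙ ℙ)
    (hpos : ∀ k : ℕ, 0 < ℙ {ω | ξ 0 ω = k})
    (R r : ℕ → ℝ)
    (hR : ∀ n, R n = -Real.log (ℙ {ω | n ≤ ξ 0 ω}).toReal)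
    (hr : ∀ n : ℕ, 1 ≤ n → r n = R n - R (n - 1))
    (hrmono : Monotone r)
    (hrinf : Tendsto r atTop atTop)
    (a : ℕ → ℕ)
    (ha : ∀ n : ℕ, 1 ≤ n →
      IsGreatest {k : ℕ | 1 / (n : ℝ) ≤ (ℙ {ω | k ≤ ξ 0 ω}).toReal} (a n))
    (m : ℕ) (hm : 1 ≤ m)
    (hconv : Summable (fun k : ℕ => Real.exp (-(m : ℝ) * r (k + 1))))
    (hdiv : ¬ Summable (fun k : ℕ => Real.exp (-((m : ℝ) - 1) * r (k + 1)))) :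
    ℙ {ω | limsup (fun n => (((Finset.range n).sup fun i => ξ i ω : ℕ) : ℤ) - (a n : ℤ))
        atTop = (m : ℤ)} = 1 ∧
    ∀ l : ℤ, -1 ≤ l → l ≤ (m : ℤ) →
      ℙ (limsup (fun n =>
          {ω | (((Finset.range n).sup fun i => ξ i ω : ℕ) : ℤ) = (a n : ℤ) + l})
        atTop) = 1 := by
  set q := tailProb ℙ (ξ 0)
  have hq_pos : ∀ k, 0 < q k := tailProb_pos hpos
  have hq_anti : Antitone q := tailProb_antitone (ξ 0)
  have hq : ∀ k, q (k + 1) = q k * Real.exp (-r (k + 1)) := succ_eq_mul_exp_neg_of_log hq_pos hR hr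
  have hratio := tendsto_tail_succ_div hq hq_pos hrinf
  have ha' : IsQuantile q a := ha
  have hle : ∀ᵐ ω ∂ℙ, ∀ᶠ n in atTop, ξ n ω ≤ a n + m := ae_eventually_le_of_summable hident
    (ha'.summable_tail_add_succ hq_pos hq_anti hq hrmono hrinf hconv)
  have hge : ∀ᵐ ω ∂ℙ, ∃ᶠ n in atTop, a (n + 1) + m ≤ ξ n ω :=
    ae_frequently_le_of_not_summable hmeas hindep hident
      (ha'.not_summable_tail_add hq_pos hq_anti hq hrmono hrinf hm hdiv)
  have hlow := ae_frequently_forall_lt_quantile hmeas hindep hident ha' hq_pos hratio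
  have key := (hle.and (hge.and hlow)).mono fun ω ⟨h₁, h₂, h₃⟩ =>
    limsup_sup_range_sub_eq (ha'.monotoneOn hq_pos hq_anti) (ha'.tendsto_atTop hq_pos hq_anti)
      (ha'.eventually_succ_le hq_pos hq_anti hratio) h₁ h₂ h₃
  refine ⟨?_, fun l hl₁ hl₂ => ?_⟩ <;>
    refine (measure_congr (eventuallyEq_univ.2 ?_)).trans measure_univ
  · exact key.mono fun ω h => h.1
  · exact key.mono fun ω h => mem_limsup_iff_frequently_mem.2 (h.2 l hl₁ hl₂)
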